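/- arXiv:2210.14751 — 2 statements merged into one kernel-verified Lean document; each statement's English description precedes it below -/
import Mathlib

section
/- Let R = Γ^T Γ be the Cholesky factorization of a K×K positive definite correlation matrix, with Γ = (γ_{k₁,k₂}) upper triangular. Then the determinant of the matrix obtained by replacing the (K, K−1) entry (and its symmetric counterpart) of R by t is positive if and only if t lies in the open interval (g − h, g + h), where g = Σ_{k=1}^{K−2} γ_{k,K−1} γ_{k,K} and h = γ_{K−1,K−1} · sqrt(1 − Σ_{k=1}^{K−2} γ_{k,K}²). -/
/-!
Write `a = K-1`, `b = K`, `γ = γ_{K-1,K-1}` and `u = (t - g) / γ`. Replacing the last column of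
`Γ` by `(γ_{1,K}, …, γ_{K-2,K}, u, 1)` gives an upper triangular `U` with
`R(t) = Uᵀ diag(1, …, 1, δ) U`, where `δ = γ_{K-1,K}² + γ_{K,K}² - u²`: `U` agrees with `Γ`
outside the rows `a` and `b`, `u` makes the `(a, b)` entry equal to `t` and `δ` restores the
`(b, b)` entry. Hence `det R(t) = (γ_{1,1} ⋯ γ_{K-1,K-1})² δ`, and since the unit diagonal of
`R` gives `γ_{K-1,K}² + γ_{K,K}² = 1 - Σ_{k ≤ K-2} γ_{k,K}²`, the sign condition `δ > 0` is
`|t - g| < h`.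
-/

open Matrix Finset

lemma Fintype.sum_eq_add_add_sum_compl_pair {ι M : Type*} [Fintype ι] [DecidableEq ι]
    [AddCommMonoid M] {a b : ι} (hab : a ≠ b) (f : ι → M) :
    ∑ k, f k = f a + f b + ∑ k ∈ {a, b}ᶜ, f k := by
  rw [← sum_pair hab, sum_add_sum_compl]

namespace Matrix

variable {ι α : Type*} [DecidableEq ι] [CommRing α]

/-- The paper's `R(t)`, for `a = K-1` and `b = K`. -/
def updateSymm (M : Matrix ι ι α) (a b : ι) (t : α) : Matrix ι ι α :=
  of fun i j => if (i = b ∧ j = a) ∨ (i = a ∧ j = b) then t else M i j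

/-- The factor `U` in `R(t) = Uᵀ diag(1, …, 1, δ) U`, parametrized by `x = u - Γ a b`. -/
def updateSymmFactor (Γ : Matrix ι ι α) (a b : ι) (x : α) : Matrix ι ι α :=
  Γ.updateCol b (Function.update (Function.update (Γᵀ b) a (Γ a b + x)) b 1)

lemma updateSymmFactor_apply (Γ : Matrix ι ι α) (a b : ι) (x : α) (k i : ι) :
    Γ.updateSymmFactor a b x k i =
      if i = b then (if k = b then 1 else if k = a then Γ a b + x else Γ k b) else Γ k i := by
  simp only [updateSymmFactor, updateCol_apply, Function.update_apply, transpose_apply]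

lemma updateSymmFactor_apply_of_ne (Γ : Matrix ι ι α) {a b k : ι} (x : α) (hka : k ≠ a)
    (hkb : k ≠ b) (i : ι) : Γ.updateSymmFactor a b x k i = Γ k i := by
  rw [updateSymmFactor_apply, if_neg hkb, if_neg hka, ite_eq_right_iff]
  exact fun hi => hi ▸ rfl

lemma isUpperTriangular_updateSymmFactor [LinearOrder ι] {Γ : Matrix ι ι α} {a b : ι}
    (hΓ : Γ.IsUpperTriangular) (hb : ∀ i, i ≤ b) (x : α) :
    (Γ.updateSymmFactor a b x).IsUpperTriangular := by
  intro i j (hji : j < i)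
  rw [updateSymmFactor_apply, if_neg (hji.trans_le (hb i)).ne]
  exact hΓ hji

variable [Fintype ι]

lemma transpose_mul_diagonal_mul_apply (U : Matrix ι ι α) (d : ι → α) (i j : ι) :
    (Uᵀ * diagonal d * U) i j = ∑ k, U k i * d k * U k j := by
  simp only [mul_apply (M := Uᵀ * diagonal d), mul_diagonal, transpose_apply]

lemma updateSymm_transpose_mul_self_eq (Γ : Matrix ι ι α) {a b : ι} (hab : a ≠ b)
    (hb : ∀ j, j ≠ b → Γ b j = 0) (ha : ∀ j, j ≠ a → j ≠ b → Γ a j = 0) (x : α) :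
    (Γᵀ * Γ).updateSymm a b ((Γᵀ * Γ) a b + Γ a a * x) =
      (Γ.updateSymmFactor a b x)ᵀ *
        diagonal (Function.update 1 b (Γ a b ^ 2 + Γ b b ^ 2 - (Γ a b + x) ^ 2)) *
          Γ.updateSymmFactor a b x := by
  set d : ι → α := Function.update 1 b (Γ a b ^ 2 + Γ b b ^ 2 - (Γ a b + x) ^ 2)
  have hΓΓ (i j : ι) :
      (Γᵀ * Γ) i j = Γ a i * Γ a j + Γ b i * Γ b j + ∑ k ∈ {a, b}ᶜ, Γ k i * Γ k j := by
    rw [mul_apply, Fintype.sum_eq_add_add_sum_compl_pair hab]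
    rfl
  have hrest (i j : ι) :
      ∑ k ∈ {a, b}ᶜ, Γ.updateSymmFactor a b x k i * d k * Γ.updateSymmFactor a b x k j =
        ∑ k ∈ {a, b}ᶜ, Γ k i * Γ k j := by
    refine sum_congr rfl fun k hk => ?_
    simp only [mem_compl, mem_insert, mem_singleton, not_or] at hk
    simp only [updateSymmFactor_apply_of_ne Γ x hk.1 hk.2, d, Function.update_of_ne hk.2,
      Pi.one_apply, mul_one]
  have hba : Γ b a = 0 := hb a hab
  ext i j
  rw [transpose_mul_diagonal_mul_apply, Fintype.sum_eq_add_add_sum_compl_pair hab, hrest]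
  simp only [updateSymm, of_apply, hΓΓ, d, Function.update_self, Function.update_of_ne hab,
    Pi.one_apply, mul_one]
  split_ifs with h
  · rcases h with ⟨rfl, rfl⟩ | ⟨rfl, rfl⟩
    · simp only [updateSymmFactor_apply, if_pos, if_neg hab, hba]
      rw [sum_congr rfl fun k _ => mul_comm (Γ k i) (Γ k j)]
      ring
    · simp only [updateSymmFactor_apply, if_pos, if_neg hab, if_neg (Ne.symm hab), hba]
      ring
  · by_cases hi : i = b <;> by_cases hj : j = b
    · subst hi hj
      simp only [updateSymmFactor_apply, if_pos, if_neg hab]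
      ring
    · subst hi
      have hja : j ≠ a := fun hja => h (Or.inl ⟨rfl, hja⟩)
      simp only [updateSymmFactor_apply, if_pos, if_neg hab, if_neg hj, hb j hj, ha j hja hj]
      ring
    · subst hj
      have hia : i ≠ a := fun hia => h (Or.inr ⟨hia, rfl⟩)
      simp only [updateSymmFactor_apply, if_pos, if_neg hab, if_neg hi, hb i hi, ha i hia hi]
      ring
    · simp only [updateSymmFactor_apply, if_neg hi, if_neg hj, hb i hi, hb j hj]
      ring

variable [LinearOrder ι] {Γ : Matrix ι ι α} {a b : ι}

lemma det_updateSymmFactor (hΓ : Γ.IsUpperTriangular) (hb : ∀ i, i ≤ b) (x : α) :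
    (Γ.updateSymmFactor a b x).det = ∏ i ∈ univ.erase b, Γ i i := by
  rw [det_of_isUpperTriangular (isUpperTriangular_updateSymmFactor hΓ hb x),
    ← mul_prod_erase _ _ (mem_univ b), updateSymmFactor_apply, if_pos rfl, if_pos rfl, one_mul]
  refine prod_congr rfl fun i hi => ?_
  rw [updateSymmFactor_apply, if_neg (ne_of_mem_erase hi)]

theorem det_updateSymm_transpose_mul_self (hΓ : Γ.IsUpperTriangular) (hab : a ≠ b)
    (hb : ∀ i, i ≤ b) (ha : ∀ i, i ≠ b → i ≤ a) (x : α) :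
    ((Γᵀ * Γ).updateSymm a b ((Γᵀ * Γ) a b + Γ a a * x)).det =
      (∏ i ∈ univ.erase b, Γ i i) ^ 2 * (Γ a b ^ 2 + Γ b b ^ 2 - (Γ a b + x) ^ 2) := by
  have hrow_b (j : ι) (hj : j ≠ b) : Γ b j = 0 := hΓ ((hb j).lt_of_ne hj)
  have hrow_a (j : ι) (hja : j ≠ a) (hjb : j ≠ b) : Γ a j = 0 := hΓ ((ha j hjb).lt_of_ne hja)
  rw [updateSymm_transpose_mul_self_eq Γ hab hrow_b hrow_a, det_mul, det_mul, det_transpose,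
    det_diagonal, prod_update_of_mem (mem_univ b), det_updateSymmFactor hΓ hb]
  simp only [Pi.one_apply, prod_const_one]
  ring

end Matrix

lemma sq_div_lt_iff_mem_Ioo {c : ℝ} (hc : 0 < c) (g s t : ℝ) :
    ((t - g) / c) ^ 2 < s ↔ t ∈ Set.Ioo (g - c * √s) (g + c * √s) := by
  rw [← sq_abs, abs_div, abs_of_pos hc, ← Real.lt_sqrt (by positivity), div_lt_iff₀' hc,
    abs_sub_lt_iff, Set.mem_Ioo]
  constructor <;> rintro ⟨h₁, h₂⟩ <;> constructor <;> linarith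

/-- Feasible interval for the `(K, K-1)` entry of a positive definite correlation matrix
`R = Γᵀ Γ`, computed from its Cholesky factor `Γ`: the matrix obtained by replacing the
`(K, K-1)` entry (and its symmetric counterpart) by `t` has positive determinant iff
`t ∈ (g - h, g + h)` with `g = Σ_{k≤K-2} γ_{k,K-1} γ_{k,K}` and
`h = γ_{K-1,K-1}·sqrt(1 - Σ_{k≤K-2} γ_{k,K}²)`. -/
theorem cholesky_feasible_interval (n : ℕ)
    (R Γ : Matrix (Fin (n + 2)) (Fin (n + 2)) ℝ)
    (hfac : R = Γ.transpose * Γ)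
    (hupper : ∀ i j : Fin (n + 2), j < i → Γ i j = 0)
    (hdiagΓ : ∀ i, 0 < Γ i i)
    (hunit : ∀ i, R i i = 1)
    (t : ℝ) :
    0 < (Matrix.det (fun i j =>
          if (i = (⟨n + 1, by omega⟩ : Fin (n + 2)) ∧ j = (⟨n, by omega⟩ : Fin (n + 2)))
              ∨ (i = (⟨n, by omega⟩ : Fin (n + 2)) ∧ j = (⟨n + 1, by omega⟩ : Fin (n + 2)))
          then t else R i j)) ↔
      t ∈ Set.Ioo
        ((∑ k : Fin n, Γ (k.castLE (by omega)) ⟨n, by omega⟩ *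
            Γ (k.castLE (by omega)) ⟨n + 1, by omega⟩) -
          Γ ⟨n, by omega⟩ ⟨n, by omega⟩ *
            Real.sqrt (1 - ∑ k : Fin n, (Γ (k.castLE (by omega)) ⟨n + 1, by omega⟩) ^ 2))
        ((∑ k : Fin n, Γ (k.castLE (by omega)) ⟨n, by omega⟩ *
            Γ (k.castLE (by omega)) ⟨n + 1, by omega⟩) +
          Γ ⟨n, by omega⟩ ⟨n, by omega⟩ *
            Real.sqrt (1 - ∑ k : Fin n, (Γ (k.castLE (by omega)) ⟨n + 1, by omega⟩) ^ 2)) := by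
  set a : Fin (n + 2) := ⟨n, by omega⟩
  set b : Fin (n + 2) := ⟨n + 1, by omega⟩
  set g := ∑ k : Fin n, Γ (k.castLE (by omega)) a * Γ (k.castLE (by omega)) b
  set s := 1 - ∑ k : Fin n, Γ (k.castLE (by omega)) b ^ 2 with hs
  have hab : a < b := Fin.castSucc_lt_last (Fin.last n)
  have hb (i : Fin (n + 2)) : i ≤ b := Fin.le_last i
  have ha (i : Fin (n + 2)) (hi : i ≠ b) : i ≤ a :=
    (Fin.le_castSucc_iff (j := Fin.last n)).2 (Fin.lt_last_iff_ne_last.2 hi)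
  have hγ : 0 < Γ a a := hdiagΓ a
  have hΓ : Γ.IsUpperTriangular := fun i j => hupper i j
  have hR (i j : Fin (n + 2)) :
      R i j = ∑ k : Fin n, Γ (k.castLE (by omega)) i * Γ (k.castLE (by omega)) j +
        Γ a i * Γ a j + Γ b i * Γ b j := by
    rw [hfac, mul_apply, Fin.sum_univ_castSucc, Fin.sum_univ_castSucc]
    rfl
  have hRab : R a b = g + Γ a a * Γ a b := by
    rw [hR, hupper b a hab, zero_mul, add_zero]
  have hs_eq : s = Γ a b ^ 2 + Γ b b ^ 2 := by
    rw [hs, ← hunit b, hR]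
    simp only [sq]
    ring
  have hdet := det_updateSymm_transpose_mul_self hΓ hab.ne hb ha ((t - R a b) / Γ a a)
  rw [← hfac, mul_div_cancel₀ _ hγ.ne', add_sub_cancel] at hdet
  have hu : Γ a b + (t - R a b) / Γ a a = (t - g) / Γ a a := by
    rw [hRab]; field_simp; ring
  change 0 < (R.updateSymm a b t).det ↔ _
  rw [hdet, mul_pos_iff_of_pos_left (pow_pos (prod_pos fun i _ => hdiagΓ i) 2), sub_pos, ← hs_eq,
    hu, sq_div_lt_iff_mem_Ioo hγ]
end

section
/- Let Z₁ < Z₂ be reals and X(Z) = (1, Z, Z²). Then X([Z₁, Z₂]) ⊆ Conv({X(Z₁), X(Z₂), X₃}), where X₃ = (1, (Z₁+Z₂)/2, Z₁Z₂) is the point obtained from the intersection of the tangent lines to the parabola f(Z)=Z² at Z₁ and Z₂. Hence any linear functional of (1, Z, Z²) that is bounded in value at the three points X(Z₁), X(Z₂), X₃ is equally bounded on the whole curve segment. -/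
/-!
On the parameter segment `Z = a Z₁ + b Z₂` (`a, b ≥ 0`, `a + b = 1`) one has the identity
`X(Z) = a² X(Z₁) + b² X(Z₂) + 2ab X₃`: the parabola arc is the quadratic Bézier curve with control
points `X(Z₁)`, `X₃`, `X(Z₂)`. By de Casteljau, such a point is a convex combination of a point of
`[X(Z₁), X₃]` and a point of `[X₃, X(Z₂)]`, hence lies in the triangle.
-/

theorem quadratic_bezier_mem_convexHull {𝕜 E : Type*} [CommRing 𝕜] [PartialOrder 𝕜]
    [IsOrderedRing 𝕜] [AddCommGroup E] [Module 𝕜 E] {x y z : E} {a b : 𝕜}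
    (ha : 0 ≤ a) (hb : 0 ≤ b) (hab : a + b = 1) :
    a ^ 2 • x + b ^ 2 • y + (2 * a * b) • z ∈ convexHull 𝕜 {x, y, z} := by
  have hconv := convex_convexHull 𝕜 ({x, y, z} : Set E)
  have hx : x ∈ convexHull 𝕜 {x, y, z} := subset_convexHull 𝕜 _ (by simp)
  have hy : y ∈ convexHull 𝕜 {x, y, z} := subset_convexHull 𝕜 _ (by simp)
  have hz : z ∈ convexHull 𝕜 {x, y, z} := subset_convexHull 𝕜 _ (by simp)
  have de_casteljau :
      a ^ 2 • x + b ^ 2 • y + (2 * a * b) • z = a • (a • x + b • z) + b • (a • z + b • y) := by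
    module
  rw [de_casteljau]
  exact hconv (hconv hx hz ha hb hab) (hconv hz hy ha hb hab) ha hb hab

theorem moment_curve_eq_bezier (Z₁ Z₂ : ℝ) {a b : ℝ} (hab : a + b = 1) :
    (![1, a * Z₁ + b * Z₂, (a * Z₁ + b * Z₂) ^ 2] : Fin 3 → ℝ) =
      a ^ 2 • ![1, Z₁, Z₁ ^ 2] + b ^ 2 • ![1, Z₂, Z₂ ^ 2] +
        (2 * a * b) • ![1, (Z₁ + Z₂) / 2, Z₁ * Z₂] := by
  obtain rfl : b = 1 - a := by linear_combination hab
  ext i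
  fin_cases i <;> simp <;> ring

theorem moment_curve_subset_convexHull_general (Z₁ Z₂ : ℝ) :
    (fun Z => (![1, Z, Z ^ 2] : Fin 3 → ℝ)) '' Set.Icc Z₁ Z₂ ⊆
      convexHull ℝ
        {![1, Z₁, Z₁ ^ 2], ![1, Z₂, Z₂ ^ 2], ![1, (Z₁ + Z₂) / 2, Z₁ * Z₂]} := by
  rintro _ ⟨Z, hZ, rfl⟩
  obtain ⟨a, b, ha, hb, hab, rfl⟩ := Icc_subset_segment hZ
  simp only [smul_eq_mul]
  rw [moment_curve_eq_bezier Z₁ Z₂ hab]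
  exact quadratic_bezier_mem_convexHull ha hb hab

/-- The segment of the moment curve `Z ↦ (1, Z, Z²)` over `[Z₁, Z₂]` is contained in the
convex hull of the three points `X(Z₁)`, `X(Z₂)` and `X₃ = (1, (Z₁+Z₂)/2, Z₁Z₂)`, the
latter coming from the intersection of the tangents to the parabola at `Z₁` and `Z₂`. -/
theorem moment_curve_subset_convexHull (Z₁ Z₂ : ℝ) (h : Z₁ < Z₂) :
    (fun Z => (![1, Z, Z ^ 2] : Fin 3 → ℝ)) '' Set.Icc Z₁ Z₂ ⊆
      convexHull ℝ
        {![1, Z₁, Z₁ ^ 2], ![1, Z₂, Z₂ ^ 2], ![1, (Z₁ + Z₂) / 2, Z₁ * Z₂]} :=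
  moment_curve_subset_convexHull_general Z₁ Z₂
end
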